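/- Let (ζ′_k)_{k≥1} be i.i.d. nonnegative real random variables with 0 < E(ζ′₁) < ∞ and E(|ζ′₁ − E(ζ′₁)|^β) < ∞ for some β ≥ 2. Then there exists a constant C_G > 0 (depending only on β and the law of ζ′₁) such that for every n ≥ 1 and every b ≥ 2·n·E(ζ′₁): P( Σ_{k=1}^n ζ′_k > b ) ≤ C_G·n·b^{−β}. -/

import Mathlib

open MeasureTheory ProbabilityTheory Filter Set

noncomputable section

/-- A standard one-dimensional Brownian motion started at `0`, parametrized by `ℝ`
(only its restriction to nonnegative times is constrained). -/
def IsStandardBM {Ω : Type*} [MeasurableSpace Ω] (P : Measure Ω) (B : ℝ → Ω → ℝ) : Prop :=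
  (∀ t : ℝ, Measurable (B t)) ∧
  (∀ ω, B 0 ω = 0) ∧
  (∀ ω, Continuous fun t => B t ω) ∧
  (∀ (n : ℕ) (t : ℕ → ℝ), Monotone t → 0 ≤ t 0 →
    iIndepFun
      (fun i : Fin n => fun ω => B (t (i + 1)) ω - B (t i) ω) P) ∧
  (∀ s t : ℝ, 0 ≤ s → s ≤ t →
    P.map (fun ω => B t ω - B s ω) = gaussianReal 0 (Real.toNNReal (t - s)))

/-- A random walk in a time-dependent i.i.d. random environment.  `Ωe` is the sample
space of environments, `Ωq` the quenched sample space. -/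
structure RWre (Ωe Ωq : Type*) [MeasurableSpace Ωe] [MeasurableSpace Ωq] where
  /-- law of the environment -/
  Pe : Measure Ωe
  probPe : IsProbabilityMeasure Pe
  /-- quenched law, given the environment -/
  Pq : Ωe → Measure Ωq
  probPq : ∀ ωe, IsProbabilityMeasure (Pq ωe)
  /-- the environment: a sequence of random probability measures on `ℝ` -/
  env : ℕ → Ωe → Measure ℝ
  /-- the steps of the walk -/
  X : ℕ → Ωq → ℝ
  measX : ∀ n, Measurable (X n)
  measEnv : ∀ n, Measurable (env n)
  probEnv : ∀ n ωe, IsProbabilityMeasure (env n ωe)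
  quenchedLaw : ∀ n ωe, (Pq ωe).map (X n) = env n ωe
  quenchedIndep : ∀ ωe, iIndepFun X (Pq ωe)
  envIndep : iIndepFun env Pe
  envIdent : ∀ n, Pe.map (env n) = Pe.map (env 0)

namespace RWre

variable {Ωe Ωq : Type*} [MeasurableSpace Ωe] [MeasurableSpace Ωq] (R : RWre Ωe Ωq)

/-- the walk: `S n = X 1 + ⋯ + X n` (indexing steps from `0`: `S 1 = X 0` is the paper's `S₁`). -/
def S (n : ℕ) (ωq : Ωq) : ℝ := ∑ i ∈ Finset.range n, R.X i ωq

/-- quenched mean `Mₙ = E_μ Sₙ` -/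
def M (n : ℕ) (ωe : Ωe) : ℝ := ∫ ωq, R.S n ωq ∂(R.Pq ωe)

/-- the centered walk `Uₙ = Sₙ - Mₙ` -/
def U (n : ℕ) (ωe : Ωe) (ωq : Ωq) : ℝ := R.S n ωq - R.M n ωe

/-- quenched variance `ηₙ = E_μ Uₙ²` -/
def eta (n : ℕ) (ωe : Ωe) : ℝ := ∫ ωq, (R.U n ωe ωq) ^ 2 ∂(R.Pq ωe)

/-- `ζₙ = ∑_{k=1}^n E_μ |U_k - U_{k-1}|^α` -/
def zeta (α : ℝ) (n : ℕ) (ωe : Ωe) : ℝ :=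
  ∑ k ∈ Finset.range n, ∫ ωq, |R.U (k + 1) ωe ωq - R.U k ωe ωq| ^ α ∂(R.Pq ωe)

/-- `σ = (E M₁²)^{1/2}` -/
def sigma : ℝ := Real.sqrt (∫ ωe, (R.M 1 ωe) ^ 2 ∂(R.Pe))

end RWre

/-- The broken line through the points `(k, g k)`, `k ∈ ℕ`, evaluated at `s ≥ 0`. -/
def brokenLine (g : ℕ → ℝ) (s : ℝ) : ℝ :=
  g ⌊s⌋₊ + (s - ⌊s⌋₊) * (g (⌊s⌋₊ + 1) - g ⌊s⌋₊)

/-!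
Fix a level `y ≥ m + b / (4β)`, where `m = E ζ₀`. On the event `Σ ζ_k > b` either some `ζ_k`
exceeds `y`, which by Markov's inequality for `|ζ₀ - m|^β` costs at most
`n E|ζ₀ - m|^β (4β / b)^β`, or the truncated sum `Σ min ζ_k y` exceeds `b`. If `n ≤ 2β`, take
`y = b / n`: the truncated sum never exceeds `b`. Otherwise take `y = b / (2β)` and apply the
Chernoff bound at `t = log b / y`, estimating the moment generating function of `min ζ y` with
Bennett's inequality `e^x ≤ 1 + x + (x / y)² (e^y - 1 - y)` for `0 ≤ x ≤ y`; since
`n ≤ b / (2m)` the exponent is at most `-β log b + 2β² E ζ₀² / m`.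
-/

open Real Finset

theorem exp_le_one_add_add_sq_div_mul {x y : ℝ} (hx : 0 ≤ x) (hxy : x ≤ y) :
    exp x ≤ 1 + x + x ^ 2 / y ^ 2 * (exp y - 1 - y) := by
  obtain rfl | hy := (hx.trans hxy).eq_or_lt
  · simp [le_antisymm hxy hx]
  have tail (z : ℝ) : HasSum (fun k : ℕ => z ^ (k + 2) / (k + 2).factorial) (exp z - 1 - z) := by
    have := (hasSum_nat_add_iff' 2).2 (exp_eq_exp_ℝ ▸ NormedSpace.expSeries_div_hasSum_exp z)
    simpa [Finset.sum_range_succ, sub_sub] using this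
  have hle := hasSum_le (fun k => ?_) (tail x) ((tail y).mul_left (x ^ 2 / y ^ 2))
  · linarith
  · rw [← mul_div_assoc]
    gcongr
    calc x ^ (k + 2) = x ^ 2 * x ^ k := by ring
      _ ≤ x ^ 2 * y ^ k := by gcongr
      _ = x ^ 2 / y ^ 2 * y ^ (k + 2) := by field_simp; ring

section

variable {Ω : Type*} [MeasurableSpace Ω] {μ : Measure Ω}

theorem memLp_of_integrable_abs_sub_rpow [IsFiniteMeasure μ] {X : Ω → ℝ}
    (hX : AEStronglyMeasurable X μ) {m β : ℝ} (hβ : 0 < β)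
    (hint : Integrable (fun ω => |X ω - m| ^ β) μ) {p : ENNReal} (hp : p ≤ ENNReal.ofReal β) :
    MemLp X p μ := by
  have hcent : MemLp (fun ω => X ω - m) (ENNReal.ofReal β) μ :=
    (integrable_norm_rpow_iff (hX.sub aestronglyMeasurable_const) (by simpa using hβ)
      ENNReal.ofReal_ne_top).1 (by simpa [ENNReal.toReal_ofReal hβ.le] using hint)
  convert (hcent.mono_exponent hp).add (memLp_const m) using 1
  ext ω
  simp

theorem measureReal_add_lt_le_div_rpow [IsFiniteMeasure μ] {X : Ω → ℝ} {m β a : ℝ} (hβ : 0 ≤ β)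
    (ha : 0 < a) (hint : Integrable (fun ω => |X ω - m| ^ β) μ) :
    μ.real {ω | m + a < X ω} ≤ (∫ ω, |X ω - m| ^ β ∂μ) / a ^ β := by
  have hsub : {ω | m + a < X ω} ⊆ {ω | a ^ β ≤ |X ω - m| ^ β} := fun ω hω => by
    have hω : m + a < X ω := hω
    have : a ≤ |X ω - m| := (le_abs_self _).trans' (by linarith)
    exact rpow_le_rpow ha.le this hβ
  have hmarkov := mul_meas_ge_le_integral_of_nonneg (ae_of_all _ fun ω => by positivity) hint
    (a ^ β)
  rw [le_div_iff₀' (by positivity)]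
  exact (mul_le_mul_of_nonneg_left (measureReal_mono hsub) (by positivity)).trans hmarkov

theorem measureReal_lt_sum_le_add_lt_sum_min [IsFiniteMeasure μ] {ι : Type*} (s : Finset ι)
    (X : ι → Ω → ℝ) (y b : ℝ) :
    μ.real {ω | b < ∑ k ∈ s, X k ω}
      ≤ ∑ k ∈ s, μ.real {ω | y < X k ω} + μ.real {ω | b < ∑ k ∈ s, min (X k ω) y} := by
  have hsub : {ω | b < ∑ k ∈ s, X k ω}
      ⊆ (⋃ k ∈ s, {ω | y < X k ω}) ∪ {ω | b < ∑ k ∈ s, min (X k ω) y} := by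
    intro ω hω
    by_cases hle : ∀ k ∈ s, X k ω ≤ y
    · right
      simpa only [mem_ofPred_eq, Finset.sum_congr rfl fun k hk => min_eq_left (hle k hk)]
    · obtain ⟨k, hk, hky⟩ : ∃ k ∈ s, y < X k ω := by simpa using hle
      exact Or.inl (mem_biUnion hk hky)
  calc μ.real {ω | b < ∑ k ∈ s, X k ω} ≤ _ := measureReal_mono hsub
    _ ≤ _ := measureReal_union_le _ _
    _ ≤ _ := by gcongr; exact measureReal_biUnion_finset_le _ _

theorem measureReal_lt_sum_le_of_identDistrib [IsFiniteMeasure μ] {X : ℕ → Ω → ℝ}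
    (hident : ∀ k, IdentDistrib (X k) (X 0) μ μ) {m β a y : ℝ} (hβ : 0 ≤ β) (ha : 0 < a)
    (hy : m + a ≤ y) (hint : Integrable (fun ω => |X 0 ω - m| ^ β) μ) (n : ℕ) (b : ℝ) :
    μ.real {ω | b < ∑ k ∈ range n, X k ω}
      ≤ n * ((∫ ω, |X 0 ω - m| ^ β ∂μ) / a ^ β)
        + μ.real {ω | b < ∑ k ∈ range n, min (X k ω) y} := by
  have htail (k : ℕ) : μ.real {ω | y < X k ω} ≤ (∫ ω, |X 0 ω - m| ^ β ∂μ) / a ^ β :=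
    calc μ.real {ω | y < X k ω} = μ.real {ω | y < X 0 ω} :=
          congrArg ENNReal.toReal ((hident k).measure_mem_eq measurableSet_Ioi)
      _ ≤ μ.real {ω | m + a < X 0 ω} := measureReal_mono fun ω hω => hy.trans_lt hω
      _ ≤ _ := measureReal_add_lt_le_div_rpow hβ ha hint
  calc _ ≤ _ := measureReal_lt_sum_le_add_lt_sum_min (range n) X y b
    _ ≤ _ := by gcongr; simpa using sum_le_card_nsmul (range n) _ _ fun k _ => htail k

theorem mgf_le_exp_of_nonneg_of_le [IsProbabilityMeasure μ] {Y : Ω → ℝ} (hY : Measurable Y)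
    {y t : ℝ} (hY0 : ∀ ω, 0 ≤ Y ω) (hYy : ∀ ω, Y ω ≤ y) (ht : 0 ≤ t) :
    mgf Y μ t ≤ exp (t * μ[Y] + μ[Y ^ 2] / y ^ 2 * (exp (t * y) - 1 - t * y)) := by
  set c := exp (t * y) - 1 - t * y
  have hbound (ω : Ω) : exp (t * Y ω) ≤ 1 + t * Y ω + c / y ^ 2 * Y ω ^ 2 := by
    have h := exp_le_one_add_add_sq_div_mul (mul_nonneg ht (hY0 ω))
      (mul_le_mul_of_nonneg_left (hYy ω) ht)
    rcases eq_or_ne t 0 with rfl | ht0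
    · simp [c]
    · rwa [mul_pow, mul_pow, mul_div_mul_left _ _ (pow_ne_zero 2 ht0), div_mul_comm] at h
  have hYint : Integrable Y μ :=
    .of_bound hY.aestronglyMeasurable y (ae_of_all _ fun ω => by
      rw [norm_of_nonneg (hY0 ω)]; exact hYy ω)
  have hY2int : Integrable (fun ω => Y ω ^ 2) μ :=
    .of_bound (hY.pow_const 2).aestronglyMeasurable (y ^ 2) (ae_of_all _ fun ω => by
      rw [norm_of_nonneg (sq_nonneg _)]; exact pow_le_pow_left₀ (hY0 ω) (hYy ω) 2)
  have hlin : Integrable (fun ω => 1 + t * Y ω) μ := (integrable_const 1).add (hYint.const_mul t)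
  calc mgf Y μ t ≤ ∫ ω, (1 + t * Y ω + c / y ^ 2 * Y ω ^ 2) ∂μ := by
        refine integral_mono ?_ (hlin.add (hY2int.const_mul _)) hbound
        exact .of_bound (hY.const_mul t).exp.aestronglyMeasurable (exp (t * y))
          (ae_of_all _ fun ω => by
            rw [norm_of_nonneg (exp_pos _).le]
            exact exp_le_exp.2 (mul_le_mul_of_nonneg_left (hYy ω) ht))
    _ = 1 + (t * μ[Y] + μ[Y ^ 2] / y ^ 2 * c) := by
        rw [integral_add hlin (hY2int.const_mul _),
          integral_add (integrable_const 1) (hYint.const_mul t), integral_const_mul,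
          integral_const_mul]
        simp only [integral_const, probReal_univ, smul_eq_mul, mul_one, Pi.pow_apply]
        ring
    _ ≤ _ := by linarith [add_one_le_exp (t * μ[Y] + μ[Y ^ 2] / y ^ 2 * c)]

theorem measureReal_le_sum_min_le_exp [IsProbabilityMeasure μ] {X : ℕ → Ω → ℝ}
    (hmeas : ∀ k, Measurable (X k)) (hindep : iIndepFun X μ)
    (hident : ∀ k, IdentDistrib (X k) (X 0) μ μ) (hnonneg : ∀ k ω, 0 ≤ X k ω)
    (hX : MemLp (X 0) 2 μ) {y t : ℝ} (hy : 0 ≤ y) (ht : 0 ≤ t) (n : ℕ) (b : ℝ) :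
    μ.real {ω | b ≤ ∑ k ∈ range n, min (X k ω) y}
      ≤ exp (-t * b + n * (t * μ[X 0] + μ[X 0 ^ 2] / y ^ 2 * (exp (t * y) - 1 - t * y))) := by
  set c := exp (t * y) - 1 - t * y
  set Y : ℕ → Ω → ℝ := fun k ω => min (X k ω) y
  have hYmeas (k : ℕ) : Measurable (Y k) := (hmeas k).min measurable_const
  have hY0 (k : ℕ) (ω : Ω) : 0 ≤ Y k ω := le_min (hnonneg k ω) hy
  have hYy (k : ℕ) (ω : Ω) : Y k ω ≤ y := min_le_right _ _
  have hYindep : iIndepFun Y μ :=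
    hindep.comp (fun _ x => min x y) fun _ => measurable_id.min measurable_const
  have hYident (k : ℕ) : IdentDistrib (Y k) (Y 0) μ μ :=
    (hident k).comp (measurable_id.min measurable_const)
  have hmgf_sum : mgf (∑ k ∈ range n, Y k) μ t = mgf (Y 0) μ t ^ n := by
    rw [hYindep.mgf_sum hYmeas, Finset.prod_eq_pow_card fun k _ =>
      mgf_congr_of_identDistrib _ _ (hYident k) t, card_range]
  have hmean : μ[Y 0] ≤ μ[X 0] :=
    integral_mono_of_nonneg (ae_of_all _ (hY0 0)) (hX.integrable one_le_two)
      (ae_of_all _ fun ω => min_le_left _ _)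
  have hsq : μ[Y 0 ^ 2] ≤ μ[X 0 ^ 2] :=
    integral_mono_of_nonneg (ae_of_all _ fun ω => sq_nonneg _) hX.integrable_sq
      (ae_of_all _ fun ω => pow_le_pow_left₀ (hY0 0 ω) (min_le_left _ _) 2)
  have hmgf_one : mgf (Y 0) μ t ≤ exp (t * μ[X 0] + μ[X 0 ^ 2] / y ^ 2 * c) := by
    refine (mgf_le_exp_of_nonneg_of_le (hYmeas 0) (hY0 0) (hYy 0) ht).trans (exp_le_exp.2 ?_)
    have hc : 0 ≤ c := by linarith [add_one_le_exp (t * y)]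
    gcongr
  have hint : Integrable (fun ω => exp (t * (∑ k ∈ range n, Y k) ω)) μ := by
    simp only [Finset.sum_apply]
    refine .of_bound (((Finset.measurable_sum _ fun k _ => hYmeas k).const_mul t).exp
      |>.aestronglyMeasurable) (exp (t * (n * y))) (ae_of_all _ fun ω => ?_)
    rw [norm_of_nonneg (exp_pos _).le]
    gcongr
    simpa using Finset.sum_le_sum fun k (_ : k ∈ range n) => hYy k ω
  have hchernoff := measure_ge_le_exp_mul_mgf (X := ∑ k ∈ range n, Y k) b ht hint
  simp only [Finset.sum_apply] at hchernoff
  calc μ.real {ω | b ≤ ∑ k ∈ range n, min (X k ω) y}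
      ≤ exp (-t * b) * mgf (∑ k ∈ range n, Y k) μ t := hchernoff
    _ ≤ exp (-t * b) * exp (t * μ[X 0] + μ[X 0 ^ 2] / y ^ 2 * c) ^ n := by
        rw [hmgf_sum]; gcongr; exact mgf_nonneg
    _ = _ := by rw [← exp_nat_mul, ← exp_add]

theorem measureReal_le_sum_min_le_rpow [IsProbabilityMeasure μ] {X : ℕ → Ω → ℝ}
    (hmeas : ∀ k, Measurable (X k)) (hindep : iIndepFun X μ)
    (hident : ∀ k, IdentDistrib (X k) (X 0) μ μ) (hnonneg : ∀ k ω, 0 ≤ X k ω)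
    (hX : MemLp (X 0) 2 μ) (hm : 0 < μ[X 0]) {β b : ℝ} (hβ : 0 < β) (hb : 1 < b) {n : ℕ}
    (hn : 2 * n * μ[X 0] ≤ b) :
    μ.real {ω | b ≤ ∑ k ∈ range n, min (X k ω) (b / (2 * β))}
      ≤ exp (2 * β ^ 2 * μ[X 0 ^ 2] / μ[X 0]) * b ^ (-β) := by
  set m := μ[X 0]
  set v := μ[X 0 ^ 2]
  set y := b / (2 * β)
  have hb0 : 0 < b := one_pos.trans hb
  have hy : 0 < y := by positivity
  have hlog : 0 ≤ log b := log_nonneg hb.le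
  have hv : 0 ≤ v := integral_nonneg fun ω => sq_nonneg _
  set t := log b / y
  have hty : t * y = log b := div_mul_cancel₀ _ hy.ne'
  refine (measureReal_le_sum_min_le_exp hmeas hindep hident hnonneg hX hy.le
    (div_nonneg hlog hy.le) n b).trans ?_
  rw [hty, exp_log hb0, rpow_def_of_pos hb0, ← exp_add, exp_le_exp]
  have hmean : n * (t * m) ≤ t * b / 2 := by
    have := mul_le_mul_of_nonneg_left hn (div_nonneg hlog hy.le); linarith
  have hvar : n * (v / y ^ 2 * (b - 1 - log b)) ≤ 2 * β ^ 2 * v / m := by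
    calc n * (v / y ^ 2 * (b - 1 - log b)) ≤ b / (2 * m) * (v / y ^ 2 * b) := by
          gcongr
          · exact mul_nonneg (by positivity) (by linarith [log_le_sub_one_of_pos hb0])
          · rw [le_div_iff₀ (by positivity)]; linarith
          · linarith
      _ = 2 * β ^ 2 * v / m := by simp only [y]; field_simp
  have htb : t * b = 2 * β * log b := by simp only [t, y]; field_simp
  linarith

theorem exists_truncation_measureReal_lt_sum_min_le [IsProbabilityMeasure μ]
    {X : ℕ → Ω → ℝ} (hmeas : ∀ k, Measurable (X k)) (hindep : iIndepFun X μ)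
    (hident : ∀ k, IdentDistrib (X k) (X 0) μ μ) (hnonneg : ∀ k ω, 0 ≤ X k ω)
    (hX : MemLp (X 0) 2 μ) (hm : 0 < μ[X 0]) {β b : ℝ} (hβ : 0 < β) (hb : 1 < b) {n : ℕ}
    (hn : 1 ≤ n) (hnb : 2 * n * μ[X 0] ≤ b) :
    ∃ y, μ[X 0] + b / (4 * β) ≤ y ∧ μ.real {ω | b < ∑ k ∈ range n, min (X k ω) y}
      ≤ exp (2 * β ^ 2 * μ[X 0 ^ 2] / μ[X 0]) * b ^ (-β) := by
  set m := μ[X 0]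
  have hb0 : 0 < b := one_pos.trans hb
  have hn0 : (0 : ℝ) < n := by exact_mod_cast hn
  rcases le_or_gt (n : ℝ) (2 * β) with hn_le | hn_gt
  · refine ⟨b / n, ?_, ?_⟩
    · have hm_le : m ≤ b / (2 * n) := by rw [le_div_iff₀ (by positivity)]; linarith
      have hβn : b / (4 * β) ≤ b / (2 * n) :=
        div_le_div_of_nonneg_left hb0.le (by positivity) (by linarith)
      have hsplit : b / n = b / (2 * n) + b / (2 * n) := by field_simp; ring
      linarith
    · have hempty : {ω | b < ∑ k ∈ range n, min (X k ω) (b / n)} = ∅ := by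
        ext ω
        simp only [mem_ofPred_eq, mem_empty_iff_false, iff_false, not_lt]
        calc ∑ k ∈ range n, min (X k ω) (b / n) ≤ ∑ k ∈ range n, b / n :=
              sum_le_sum fun k _ => min_le_right _ _
          _ = b := by simp; field_simp
      rw [hempty, measureReal_empty]; positivity
  · refine ⟨b / (2 * β), ?_, ?_⟩
    · have hm_le : m ≤ b / (4 * β) := by
        rw [le_div_iff₀ (by positivity)]; nlinarith [mul_lt_mul_of_pos_right hn_gt hm]
      have hsplit : b / (2 * β) = b / (4 * β) + b / (4 * β) := by field_simp; ring
      linarith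
    · calc μ.real {ω | b < ∑ k ∈ range n, min (X k ω) (b / (2 * β))}
          ≤ μ.real {ω | b ≤ ∑ k ∈ range n, min (X k ω) (b / (2 * β))} :=
            measureReal_mono fun ω (hω : b < _) => hω.le
        _ ≤ _ := measureReal_le_sum_min_le_rpow hmeas hindep hident hnonneg hX hm hβ hb hnb

end

theorem iid_nonneg_sum_tail_general
    {Ω : Type*} [MeasurableSpace Ω] (P : Measure Ω) (hP : IsProbabilityMeasure P)
    (ζ : ℕ → Ω → ℝ) (hmeas : ∀ k, Measurable (ζ k))
    (hindep : iIndepFun ζ P)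
    (hident : ∀ k, P.map (ζ k) = P.map (ζ 0))
    (hnonneg : ∀ k ω, 0 ≤ ζ k ω)
    (hmean_pos : 0 < ∫ ω, ζ 0 ω ∂P)
    (β : ℝ) (hβ : 2 ≤ β)
    (hmom : Integrable (fun ω => |ζ 0 ω - ∫ ω', ζ 0 ω' ∂P| ^ β) P) :
    ∃ CG > (0:ℝ), ∀ n : ℕ, 1 ≤ n → ∀ b : ℝ, 2 * n * (∫ ω, ζ 0 ω ∂P) ≤ b →
      P {ω | b < ∑ k ∈ Finset.range n, ζ k ω} ≤ ENNReal.ofReal (CG * n * b ^ (-β)) := by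
  set m := ∫ ω, ζ 0 ω ∂P
  set D := ∫ ω, |ζ 0 ω - m| ^ β ∂P
  set E := exp (2 * β ^ 2 * P[ζ 0 ^ 2] / m)
  have hβ0 : 0 < β := by linarith
  have hD : 0 ≤ D := integral_nonneg fun ω => by positivity
  have hidentDistrib (k : ℕ) : IdentDistrib (ζ k) (ζ 0) P P :=
    ⟨(hmeas k).aemeasurable, (hmeas 0).aemeasurable, hident k⟩
  have hL2 : MemLp (ζ 0) 2 P := memLp_of_integrable_abs_sub_rpow
    (hmeas 0).aestronglyMeasurable hβ0 hmom (by simpa using ENNReal.ofReal_le_ofReal hβ)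
  have hE : 0 ≤ E := (exp_pos _).le
  have hC : 1 ≤ 1 + D * (4 * β) ^ β + E := by
    have := mul_nonneg hD (rpow_nonneg (by positivity : (0 : ℝ) ≤ 4 * β) β)
    linarith
  refine ⟨1 + D * (4 * β) ^ β + E, by linarith, fun n hn b hb => ?_⟩
  have hn1 : (1 : ℝ) ≤ n := by exact_mod_cast hn
  have hb0 : 0 < b := lt_of_lt_of_le (by positivity) hb
  rw [← ENNReal.ofReal_toReal (measure_ne_top _ _), ← measureReal_def]
  refine ENNReal.ofReal_le_ofReal ?_
  rcases le_or_gt b 1 with hb1 | hb1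
  · have hbβ : 1 ≤ b ^ (-β) := one_le_rpow_of_pos_of_le_one_of_nonpos hb0 hb1 (by linarith)
    exact measureReal_le_one.trans (one_le_mul_of_one_le_of_one_le
      (one_le_mul_of_one_le_of_one_le hC hn1) hbβ)
  obtain ⟨y, hy, htrunc⟩ := exists_truncation_measureReal_lt_sum_min_le hmeas hindep
    hidentDistrib hnonneg hL2 hmean_pos hβ0 hb1 hn hb
  calc P.real {ω | b < ∑ k ∈ range n, ζ k ω}
      ≤ n * (D / (b / (4 * β)) ^ β) + E * b ^ (-β) :=
        (measureReal_lt_sum_le_of_identDistrib hidentDistrib hβ0.le (by positivity) hy hmom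
          n b).trans (by gcongr)
    _ = n * (D * (4 * β) ^ β * b ^ (-β)) + E * b ^ (-β) := by
        rw [div_rpow hb0.le (by positivity), rpow_neg hb0.le]; field_simp
    _ ≤ (1 + D * (4 * β) ^ β + E) * n * b ^ (-β) := by
        have hbβ : 0 ≤ b ^ (-β) := by positivity
        nlinarith [mul_nonneg (mul_nonneg hE hbβ) (sub_nonneg.2 hn1)]

/-- A tail bound for sums of i.i.d. nonnegative random variables with finite centered `β`-th
moment: for `b ≥ 2 n E ζ'₁`, `P(Σ_{k=1}^n ζ'_k > b) ≤ C_G n b^{-β}`. -/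
theorem iid_nonneg_sum_tail
    {Ω : Type*} [MeasurableSpace Ω] (P : Measure Ω) (hP : IsProbabilityMeasure P)
    (ζ : ℕ → Ω → ℝ) (hmeas : ∀ k, Measurable (ζ k))
    (hindep : iIndepFun ζ P)
    (hident : ∀ k, P.map (ζ k) = P.map (ζ 0))
    (hnonneg : ∀ k ω, 0 ≤ ζ k ω)
    (hmean_pos : 0 < ∫ ω, ζ 0 ω ∂P)
    (hmean_fin : Integrable (ζ 0) P)
    (β : ℝ) (hβ : 2 ≤ β)
    (hmom : Integrable (fun ω => |ζ 0 ω - ∫ ω', ζ 0 ω' ∂P| ^ β) P) :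
    ∃ CG > (0:ℝ), ∀ n : ℕ, 1 ≤ n → ∀ b : ℝ, 2 * n * (∫ ω, ζ 0 ω ∂P) ≤ b →
      P {ω | b < ∑ k ∈ Finset.range n, ζ k ω} ≤ ENNReal.ofReal (CG * n * b ^ (-β)) :=
  iid_nonneg_sum_tail_general P hP ζ hmeas hindep hident hnonneg hmean_pos β hβ hmom

end
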